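/- For any vector v ∈ ℂ^M and any Hermitian Toeplitz matrix T(f) whose first column is f ∈ ℂ^M (with f_0 real), the quadratic form v^H T(f) v equals the real part of the inner product ⟨a_v, f⟩ = Re(a_v^H f), where a_v is the autocorrelation vector of v defined by [a_v]_0 = ‖v‖² and [a_v]_k = 2 Σ_{i=0}^{M-1-k} v_{i+k} conj(v_i) for 1 ≤ k ≤ M-1. -/

import Mathlib

/-!
When `f₀` is real, `T(f) = L + Lᴴ` where `L` is the lower triangle of `T(f)` with its diagonal
halved, so `vᴴ T(f) v = 2 Re (vᴴ L v)`. Summing `vᴴ L v` along the diagonals `r - c = k` gives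
`Σₖ f_k Σᵢ conj v_{i+k} v_i`, with weight `1/2` at `k = 0`, which is exactly `½ a_vᴴ f`.
-/

open scoped BigOperators Matrix ComplexConjugate

/-- Hermitian Toeplitz matrix whose first column is `f`. -/
noncomputable def toep (M : ℕ) (f : Fin M → ℂ) : Matrix (Fin M) (Fin M) ℂ :=
  fun r c =>
    if h : (c : ℕ) ≤ (r : ℕ) then
      f ⟨(r : ℕ) - (c : ℕ), Nat.lt_of_le_of_lt (Nat.sub_le _ _) r.isLt⟩
    else
      conj (f ⟨(c : ℕ) - (r : ℕ), Nat.lt_of_le_of_lt (Nat.sub_le _ _) c.isLt⟩)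

/-- Autocorrelation vector of `v`. -/
noncomputable def autocorr (M : ℕ) (v : Fin M → ℂ) : Fin M → ℂ :=
  fun k =>
    if (k : ℕ) = 0 then ∑ i, v i * conj (v i)
    else 2 * ∑ i : Fin M,
      if h : (i : ℕ) + (k : ℕ) < M then v ⟨(i : ℕ) + (k : ℕ), h⟩ * conj (v i) else 0

theorem Fin.le_add_iff_val_add_lt {M : ℕ} (c k : Fin M) : c ≤ c + k ↔ (c : ℕ) + k < M := by
  rw [Fin.le_def, Fin.val_add_eq_ite]
  split <;> omega

/-- The shear `(k, i) ↦ (i + k, i)` of `Fin M × Fin M`, with wrap-around addition, carries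
`{i + k < M}` onto the lower triangle `{c ≤ r}` and the rest onto the strict upper triangle. -/
theorem Fin.sum_ite_le_eq_sum_dite_add_lt {R : Type*} [AddCommMonoid R] {M : ℕ}
    (F : Fin M → Fin M → R) :
    ∑ r, ∑ c, (if c ≤ r then F r c else 0) =
      ∑ k : Fin M, ∑ i : Fin M, if h : (i : ℕ) + k < M then F ⟨i + k, h⟩ i else 0 := by
  rcases M.eq_zero_or_pos with rfl | hM
  · simp
  have : NeZero M := ⟨hM.ne'⟩
  rw [Finset.sum_comm]
  conv_rhs => rw [Finset.sum_comm]
  refine Finset.sum_congr rfl fun c _ => ?_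
  refine (Fintype.sum_equiv (Equiv.addLeft c) _ _ fun k => ?_).symm
  simp only [Equiv.coe_addLeft, Fin.le_add_iff_val_add_lt]
  split_ifs with h
  · exact congrArg (F · c) (Fin.ext (Fin.val_add_eq_of_add_lt h).symm)
  · rfl

theorem Matrix.star_dotProduct_conjTranspose_mulVec {n α : Type*} [Fintype n]
    [NonUnitalSemiring α] [StarRing α] (A : Matrix n n α) (v : n → α) :
    star v ⬝ᵥ Aᴴ *ᵥ v = star (star v ⬝ᵥ A *ᵥ v) := by
  rw [Matrix.mulVec_conjTranspose, dotProduct_star, star_star, Matrix.dotProduct_mulVec]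

noncomputable def lowerToep (M : ℕ) (f : Fin M → ℂ) : Matrix (Fin M) (Fin M) ℂ :=
  fun r c =>
    if c ≤ r then
      (if c = r then 2⁻¹ else 1) * f ⟨(r : ℕ) - c, Nat.lt_of_le_of_lt (Nat.sub_le _ _) r.isLt⟩
    else 0

theorem toep_eq_lowerToep_add_conjTranspose {M : ℕ} {f : Fin M → ℂ}
    (h0 : ∀ hM : 0 < M, (f ⟨0, hM⟩).im = 0) :
    toep M f = lowerToep M f + (lowerToep M f)ᴴ := by
  ext r c
  simp only [toep, lowerToep, Matrix.add_apply, Matrix.conjTranspose_apply]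
  rcases lt_trichotomy c r with hcr | rfl | hrc
  · simp [hcr.le, hcr.ne, hcr.not_ge]
  · simp only [le_refl, if_true, dite_true, Nat.sub_self, star_mul', star_inv₀, star_ofNat,
      Complex.star_def, Complex.conj_eq_iff_im.mpr (h0 c.pos)]
    ring
  · simp [hrc.le, hrc.ne, hrc.not_ge]

theorem autocorr_apply {M : ℕ} (v : Fin M → ℂ) (k : Fin M) :
    autocorr M v k = (if (k : ℕ) = 0 then 1 else 2) *
      ∑ i : Fin M, if h : (i : ℕ) + k < M then v ⟨i + k, h⟩ * conj (v i) else 0 := by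
  unfold autocorr
  split_ifs with hk
  · simp [hk]
  · rfl

theorem star_autocorr_dotProduct (M : ℕ) (v f : Fin M → ℂ) :
    star (autocorr M v) ⬝ᵥ f = 2 * (star v ⬝ᵥ lowerToep M f *ᵥ v) := by
  have hquad : 2 * (star v ⬝ᵥ lowerToep M f *ᵥ v) = ∑ r, ∑ c,
      if c ≤ r then (if c = r then 1 else 2) * (conj (v r) * v c) *
        f ⟨(r : ℕ) - c, Nat.lt_of_le_of_lt (Nat.sub_le _ _) r.isLt⟩ else 0 := by
    simp only [dotProduct, Matrix.mulVec, lowerToep, Finset.mul_sum]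
    refine Finset.sum_congr rfl fun r _ => Finset.sum_congr rfl fun c _ => ?_
    split_ifs <;> simp <;> ring
  rw [hquad, Fin.sum_ite_le_eq_sum_dite_add_lt, dotProduct]
  refine Finset.sum_congr rfl fun k _ => ?_
  rw [Pi.star_apply, autocorr_apply, star_mul', star_sum, Finset.mul_sum, Finset.sum_mul]
  refine Finset.sum_congr rfl fun i _ => ?_
  by_cases hik : (i : ℕ) + k < M
  · have hdiag : i = ⟨i + k, hik⟩ ↔ (k : ℕ) = 0 := by simp [Fin.ext_iff]
    simp only [dif_pos hik, hdiag, Nat.add_sub_cancel_left, Fin.eta]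
    split_ifs <;> simp
  · simp [hik]

/-- `v^H T(f) v = Re ⟨a_v, f⟩`. -/
theorem stmt0 (M : ℕ) (v f : Fin M → ℂ) (h0 : ∀ hM : 0 < M, (f ⟨0, hM⟩).im = 0) :
    star v ⬝ᵥ (toep M f).mulVec v = ((star (autocorr M v) ⬝ᵥ f).re : ℂ) := by
  rw [toep_eq_lowerToep_add_conjTranspose h0, Matrix.add_mulVec, dotProduct_add,
    Matrix.star_dotProduct_conjTranspose_mulVec, star_autocorr_dotProduct, Complex.star_def,
    Complex.add_conj]
  simp
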